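/- arXiv:1804.09900 — 3 statements merged into one kernel-verified Lean document; each statement's English description precedes it below -/
import Mathlib

section
/- Let n ≥ 4 and let p : Fin n → ℝ² be the circle placement p(i) = (cos(2πi/n), sin(2πi/n)). The number of unordered pairs {e, f} of distinct 2-element subsets e = {a,c}, f = {b,d} of Fin n such that the open segment between p(a) and p(c) intersects the open segment between p(b) and p(d) is exactly (n choose 4). (This is the paper's Lemma 1: the straight-line circle drawing of the complete graph K_n has exactly (n choose 4) crossings, the maximum over all graphs on n vertices.) -/
/-!
Call three points counterclockwise when their signed area `orient` is positive. If the vertices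
are placed so that every increasing triple is counterclockwise (points in convex position), then two
chords cross exactly when their endpoints lie on opposite sides of each other's line, which happens
exactly when the chords are disjoint and interleave. So every 4-set `w < x < y < z` of vertices
carries exactly one crossing, `{w y, x z}`, and crossings are in bijection with 4-sets. The circle
placement is in convex position because for angles `α < β < γ < α + 2π`,
`orient = 4 sin ((β - α) / 2) sin ((γ - β) / 2) sin ((γ - α) / 2) > 0`.
-/

/-- The circle placement: vertex `i` of `Fin n` is placed at the point
`(cos (2πi/n), sin (2πi/n))` of the unit circle in `ℝ²`. -/
noncomputable def circlePlacement (n : ℕ) : Fin n → ℝ × ℝ :=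
  fun i => (Real.cos (2 * Real.pi * (i : ℕ) / n), Real.sin (2 * Real.pi * (i : ℕ) / n))

/-- Twice the signed area of the triangle `P Q R`: positive iff `P, Q, R` turn counterclockwise. -/
def orient (P Q R : ℝ × ℝ) : ℝ :=
  (Q.1 - P.1) * (R.2 - P.2) - (Q.2 - P.2) * (R.1 - P.1)

def SegmentsCross (A C B D : ℝ × ℝ) : Prop :=
  (openSegment ℝ A C ∩ openSegment ℝ B D).Nonempty

section Orient

variable (P Q R : ℝ × ℝ)

lemma orient_swap_left : orient Q P R = -orient P Q R := by unfold orient; ring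

lemma orient_swap_right : orient P R Q = -orient P Q R := by unfold orient; ring

lemma orient_rotate : orient Q R P = orient P Q R := by unfold orient; ring

lemma orient_self_left : orient P Q P = 0 := by unfold orient; ring

lemma orient_self_right : orient P Q Q = 0 := by unfold orient; ring

variable {P Q R}

lemma orient_add_smul (R' : ℝ × ℝ) {u v : ℝ} (huv : u + v = 1) :
    orient P Q (u • R + v • R') = u * orient P Q R + v * orient P Q R' := by
  obtain rfl : v = 1 - u := by linarith
  simp only [orient, Prod.fst_add, Prod.snd_add, Prod.smul_fst, Prod.smul_snd, smul_eq_mul]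
  ring

lemma orient_eq_zero_of_mem_openSegment (h : R ∈ openSegment ℝ P Q) : orient P Q R = 0 := by
  obtain ⟨u, v, -, -, huv, rfl⟩ := h
  rw [orient_add_smul _ huv, orient_self_left, orient_self_right]
  ring

end Orient

section SegmentsCross

variable {A B C D : ℝ × ℝ}

lemma SegmentsCross.symm (h : SegmentsCross A C B D) : SegmentsCross B D A C := by
  rwa [SegmentsCross, Set.inter_comm]

lemma segmentsCross_swap_left : SegmentsCross C A B D ↔ SegmentsCross A C B D := by
  rw [SegmentsCross, SegmentsCross, openSegment_symm]

lemma segmentsCross_swap_right : SegmentsCross A C D B ↔ SegmentsCross A C B D := by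
  rw [SegmentsCross, SegmentsCross, openSegment_symm ℝ D]

/-- A crossing point `X = u B + v D` lies on line `A C`, so
`u · orient A C B + v · orient A C D = 0` with `u, v > 0`. -/
lemma not_segmentsCross_of_orient_mul_pos (h : 0 < orient A C B * orient A C D) :
    ¬SegmentsCross A C B D := by
  rintro ⟨X, hXAC, u, v, hu, hv, huv, rfl⟩
  have hX := orient_eq_zero_of_mem_openSegment hXAC
  rw [orient_add_smul _ huv] at hX
  have hX' : (u * orient A C B + v * orient A C D) * orient A C B = 0 := by rw [hX, zero_mul]
  nlinarith [mul_pos hv h, mul_nonneg hu.le (sq_nonneg (orient A C B))]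

lemma orient_eq_zero_of_segmentsCross_left (h : SegmentsCross A C A D) : orient A C D = 0 := by
  obtain ⟨X, hXAC, u, v, -, hv, huv, rfl⟩ := h
  have hX := orient_eq_zero_of_mem_openSegment hXAC
  rw [orient_add_smul _ huv, orient_self_left] at hX
  simpa [hv.ne'] using hX

lemma div_sub_pos_of_mul_neg {u v : ℝ} (h : u * v < 0) : 0 < v / (v - u) :=
  div_pos_iff.2 (pos_and_pos_or_neg_and_neg_of_mul_pos (by nlinarith [sq_nonneg v]))

lemma div_sub_add_div_sub {u v : ℝ} (h : v - u ≠ 0) : v / (v - u) + u / (u - v) = 1 := by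
  rw [← neg_sub v u, div_neg, ← sub_eq_add_neg, ← sub_div, div_self h]

/-- Both segments pass through the point where line `A C` meets line `B D`; its barycentric
coordinates on either segment are read off from the orientations. -/
lemma segmentsCross_of_orient_mul_neg (h₁ : orient A C B * orient A C D < 0)
    (h₂ : orient B D A * orient B D C < 0) : SegmentsCross A C B D := by
  set u := orient A C B
  set v := orient A C D
  set u' := orient B D A
  set v' := orient B D C
  have hvu : v - u ≠ 0 := sub_ne_zero.2 fun h ↦ by rw [h] at h₁; nlinarith
  have hvu' : v' - u' ≠ 0 := sub_ne_zero.2 fun h ↦ by rw [h] at h₂; nlinarith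
  refine ⟨(v' / (v' - u')) • A + (u' / (u' - v')) • C,
    ⟨_, _, div_sub_pos_of_mul_neg h₂,
      div_sub_pos_of_mul_neg (u := v') (by linarith [mul_comm u' v']),
      div_sub_add_div_sub hvu', rfl⟩,
    ⟨_, _, div_sub_pos_of_mul_neg h₁,
      div_sub_pos_of_mul_neg (u := v) (by linarith [mul_comm u v]), div_sub_add_div_sub hvu, ?_⟩⟩
  have hsub : v' - u' = -(v - u) := by simp only [u, v, u', v', orient]; ring
  have hsub' : u' - v' = v - u := by linear_combination -hsub
  ext <;> simp only [Prod.fst_add, Prod.snd_add, Prod.smul_fst, Prod.smul_snd, smul_eq_mul]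
  all_goals
    rw [← neg_sub v u, hsub, hsub']
    field_simp
    simp only [u, v, u', v', orient]
    ring

end SegmentsCross

/-- The points `p i` are in strictly convex position, listed counterclockwise along `ι`. -/
def IsConvexCCW {ι : Type*} [LinearOrder ι] (p : ι → ℝ × ℝ) : Prop :=
  ∀ ⦃i j k⦄, i < j → j < k → 0 < orient (p i) (p j) (p k)

namespace IsConvexCCW

variable {ι : Type*} [LinearOrder ι] {p : ι → ℝ × ℝ}

lemma orient_ne_zero (hp : IsConvexCCW p) {i j k : ι} (hij : i ≠ j) (hjk : j ≠ k)
    (hik : i ≠ k) : orient (p i) (p j) (p k) ≠ 0 := by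
  have h₁ := orient_swap_left (p i) (p j) (p k)
  have h₂ := orient_swap_right (p i) (p j) (p k)
  have h₃ := orient_rotate (p i) (p j) (p k)
  have h₄ := orient_rotate (p j) (p k) (p i)
  have h₅ := orient_swap_right (p k) (p i) (p j)
  rcases hij.lt_or_gt with hij | hij <;> rcases hjk.lt_or_gt with hjk | hjk <;>
    rcases hik.lt_or_gt with hik | hik
  all_goals first
    | exact absurd (hij.trans hjk) hik.not_gt
    | exact absurd (hjk.trans hij) hik.not_gt
    | linarith [hp hij hjk]
    | linarith [hp hik hjk]
    | linarith [hp hik hij]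
    | linarith [hp hij hik]
    | linarith [hp hjk hik]
    | linarith [hp hjk hij]

lemma not_segmentsCross_of_shared_left (hp : IsConvexCCW p) {i j k : ι} (hij : i ≠ j)
    (hjk : j ≠ k) (hik : i ≠ k) : ¬SegmentsCross (p i) (p j) (p i) (p k) :=
  fun h ↦ hp.orient_ne_zero hij hjk hik (orient_eq_zero_of_segmentsCross_left h)

lemma segmentsCross_of_lt (hp : IsConvexCCW p) {w x y z : ι} (hwx : w < x) (hxy : x < y)
    (hyz : y < z) : SegmentsCross (p w) (p y) (p x) (p z) := by
  apply segmentsCross_of_orient_mul_neg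
  · rw [orient_swap_right]
    nlinarith [hp hwx hxy, hp (hwx.trans hxy) hyz]
  · rw [orient_rotate (p w), orient_swap_right (p x) (p y)]
    nlinarith [hp hwx (hxy.trans hyz), hp hxy hyz]

lemma not_segmentsCross_of_lt_of_lt (hp : IsConvexCCW p) {w x y z : ι} (hwx : w < x)
    (hxy : x < y) (hyz : y < z) : ¬SegmentsCross (p w) (p x) (p y) (p z) :=
  not_segmentsCross_of_orient_mul_pos (mul_pos (hp hwx hxy) (hp hwx (hxy.trans hyz)))

lemma not_segmentsCross_of_lt_of_lt_nested (hp : IsConvexCCW p) {w x y z : ι} (hwx : w < x)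
    (hxy : x < y) (hyz : y < z) : ¬SegmentsCross (p w) (p z) (p x) (p y) := by
  apply not_segmentsCross_of_orient_mul_pos
  rw [orient_swap_right (p w) (p x), orient_swap_right (p w) (p y), neg_mul_neg]
  exact mul_pos (hp hwx (hxy.trans hyz)) (hp (hwx.trans hxy) hyz)

lemma lt_lt_lt_of_segmentsCross (hp : IsConvexCCW p) {a b c d : ι} (hac : a < c) (hbd : b < d)
    (hab : a ≤ b) (hne : ({a, c} : Finset ι) ≠ {b, d}) (h : SegmentsCross (p a) (p c) (p b) (p d)) :
    a < b ∧ b < c ∧ c < d := by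
  obtain rfl | hab := hab.eq_or_lt
  · exact absurd h (hp.not_segmentsCross_of_shared_left hac.ne
      (fun hcd ↦ hne (by rw [hcd])) hbd.ne)
  refine ⟨hab, ?_⟩
  rcases lt_trichotomy c b with hcb | rfl | hbc
  · exact absurd h (hp.not_segmentsCross_of_lt_of_lt hac hcb hbd)
  · exact absurd (segmentsCross_swap_left.2 h)
      (hp.not_segmentsCross_of_shared_left hab.ne' (hab.trans hbd).ne hbd.ne)
  refine ⟨hbc, ?_⟩
  rcases lt_trichotomy c d with hcd | rfl | hdc
  · exact hcd
  · exact absurd (segmentsCross_swap_left.2 (segmentsCross_swap_right.2 h))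
      (hp.not_segmentsCross_of_shared_left hac.ne' hab.ne hbd.ne')
  · exact absurd h (hp.not_segmentsCross_of_lt_of_lt_nested hab hbd hdc)

lemma exists_lt_lt_lt_of_segmentsCross (hp : IsConvexCCW p) {a b c d : ι} (hac : a ≠ c)
    (hbd : b ≠ d) (hne : ({a, c} : Finset ι) ≠ {b, d}) (h : SegmentsCross (p a) (p c) (p b) (p d)) :
    ∃ w x y z, w < x ∧ x < y ∧ y < z ∧
      ({{a, c}, {b, d}} : Finset (Finset ι)) = {{w, y}, {x, z}} := by
  wlog hac' : a < c generalizing a c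
  · rw [Finset.pair_comm a c] at hne ⊢
    exact this hac.symm hne (segmentsCross_swap_left.2 h) (hac.lt_or_gt.resolve_left hac')
  wlog hbd' : b < d generalizing b d
  · rw [Finset.pair_comm b d] at hne ⊢
    exact this hbd.symm hne (segmentsCross_swap_right.2 h) (hbd.lt_or_gt.resolve_left hbd')
  wlog hab : a ≤ b generalizing a b c d
  · rw [Finset.pair_comm]
    exact this hbd hbd' hac hne.symm h.symm hac' (not_le.1 hab).le
  obtain ⟨hab, hbc, hcd⟩ := hp.lt_lt_lt_of_segmentsCross hac' hbd' hab hne h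
  exact ⟨a, b, c, d, hab, hbc, hcd, rfl⟩

end IsConvexCCW

section Quadruples

variable {ι : Type*} [LinearOrder ι] {w x y z : ι}

lemma sort_quadruple (hwx : w < x) (hxy : x < y) (hyz : y < z) :
    ({w, x, y, z} : Finset ι).sort = [w, x, y, z] := by
  rw [Finset.sort_insert, Finset.sort_insert, Finset.sort_insert, Finset.sort_singleton] <;>
    simp <;> and_intros <;> order

lemma card_quadruple (hwx : w < x) (hxy : x < y) (hyz : y < z) :
    ({w, x, y, z} : Finset ι).card = 4 := by
  rw [← Finset.length_sort (· ≤ ·), sort_quadruple hwx hxy hyz]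
  rfl

lemma exists_quadruple_of_card_eq_four {t : Finset ι} (ht : t.card = 4) :
    ∃ w x y z, w < x ∧ x < y ∧ y < z ∧ t = {w, x, y, z} := by
  set f := t.orderEmbOfFin ht
  have h₀₁ : f 0 < f 1 := f.strictMono (by decide)
  have h₁₂ : f 1 < f 2 := f.strictMono (by decide)
  have h₂₃ : f 2 < f 3 := f.strictMono (by decide)
  refine ⟨f 0, f 1, f 2, f 3, h₀₁, h₁₂, h₂₃, (Finset.eq_of_subset_of_card_le ?_ ?_).symm⟩
  · simp [Finset.insert_subset_iff, f, Finset.orderEmbOfFin_mem]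
  · rw [ht, card_quadruple h₀₁ h₁₂ h₂₃]

lemma sup_id_pairs_eq_quadruple :
    ({{w, y}, {x, z}} : Finset (Finset ι)).sup id = {w, x, y, z} := by
  ext u
  simp only [Finset.sup_insert, Finset.sup_singleton, id, Finset.sup_eq_union, Finset.mem_union,
    Finset.mem_insert, Finset.mem_singleton]
  tauto

end Quadruples

open scoped Classical in
/-- The crossings of the straight-line drawing of `K_ι` with vertex `i` placed at `p i`. -/
noncomputable def crossingPairs {ι : Type*} [Fintype ι] [DecidableEq ι] (p : ι → ℝ × ℝ) :
    Finset (Finset (Finset ι)) :=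
  (((Finset.univ : Finset ι).powersetCard 2).powersetCard 2).filter
    (fun s => ∃ a c b d : ι, s = {{a, c}, {b, d}} ∧ SegmentsCross (p a) (p c) (p b) (p d))

namespace IsConvexCCW

variable {ι : Type*} [LinearOrder ι] [Fintype ι] {p : ι → ℝ × ℝ}

lemma mem_crossingPairs_iff (hp : IsConvexCCW p) {s : Finset (Finset ι)} :
    s ∈ crossingPairs p ↔
      ∃ w x y z, w < x ∧ x < y ∧ y < z ∧ s = {{w, y}, {x, z}} := by
  simp only [crossingPairs, Finset.mem_filter, Finset.mem_powersetCard]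
  constructor
  · rintro ⟨⟨hpairs, hcard⟩, a, c, b, d, rfl, h⟩
    have hac : a ≠ c := by
      rintro rfl
      simpa using (hpairs (by simp : {a, a} ∈ _))
    have hbd : b ≠ d := by
      rintro rfl
      simpa using (hpairs (by simp : {b, b} ∈ _))
    exact hp.exists_lt_lt_lt_of_segmentsCross hac hbd (by rintro hne; simp [hne] at hcard) h
  · rintro ⟨w, x, y, z, hwx, hxy, hyz, rfl⟩
    have hne : ({w, y} : Finset ι) ≠ {x, z} := fun h ↦ by
      have hw : w ∈ ({x, z} : Finset ι) := h ▸ Finset.mem_insert_self w {y}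
      simp only [Finset.mem_insert, Finset.mem_singleton] at hw
      rcases hw with hw | hw <;> order
    refine ⟨⟨?_, Finset.card_pair hne⟩, w, y, x, z, rfl, hp.segmentsCross_of_lt hwx hxy hyz⟩
    simp only [Finset.insert_subset_iff, Finset.singleton_subset_iff, Finset.mem_powersetCard,
      Finset.subset_univ, true_and]
    exact ⟨Finset.card_pair (hwx.trans hxy).ne, Finset.card_pair (hxy.trans hyz).ne⟩

theorem card_crossingPairs (hp : IsConvexCCW p) :
    (crossingPairs p).card = (Fintype.card ι).choose 4 := by
  rw [← Finset.card_univ, ← Finset.card_powersetCard]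
  refine Finset.card_bij (fun s _ ↦ s.sup id) ?_ ?_ ?_
  · intro s hs
    obtain ⟨w, x, y, z, hwx, hxy, hyz, rfl⟩ := hp.mem_crossingPairs_iff.1 hs
    rw [Finset.mem_powersetCard, sup_id_pairs_eq_quadruple]
    exact ⟨Finset.subset_univ _, card_quadruple hwx hxy hyz⟩
  · intro s hs s' hs' hsup
    obtain ⟨w, x, y, z, hwx, hxy, hyz, rfl⟩ := hp.mem_crossingPairs_iff.1 hs
    obtain ⟨w', x', y', z', hwx', hxy', hyz', rfl⟩ := hp.mem_crossingPairs_iff.1 hs'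
    have := congrArg Finset.sort hsup
    simp only [sup_id_pairs_eq_quadruple, sort_quadruple hwx hxy hyz,
      sort_quadruple hwx' hxy' hyz', List.cons.injEq] at this
    obtain ⟨rfl, rfl, rfl, rfl, -⟩ := this
    rfl
  · intro t ht
    obtain ⟨w, x, y, z, hwx, hxy, hyz, rfl⟩ :=
      exists_quadruple_of_card_eq_four (Finset.mem_powersetCard.1 ht).2
    exact ⟨_, hp.mem_crossingPairs_iff.2 ⟨w, x, y, z, hwx, hxy, hyz, rfl⟩,
      sup_id_pairs_eq_quadruple⟩

end IsConvexCCW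

section Circle

open Real

lemma orient_cos_sin (α β γ : ℝ) :
    orient (cos α, sin α) (cos β, sin β) (cos γ, sin γ) =
      sin (β - α) + sin (γ - β) - sin (γ - α) := by
  simp only [orient, sin_sub]
  ring

lemma sin_two_mul_add_sin_two_mul_sub_sin (x y : ℝ) :
    sin (2 * x) + sin (2 * y) - sin (2 * x + 2 * y) = 4 * sin x * sin y * sin (x + y) := by
  simp only [sin_add, sin_two_mul, cos_two_mul]
  linear_combination (-4 * sin x * cos x) * sin_sq_add_cos_sq y
    + (-4 * sin y * cos y) * sin_sq_add_cos_sq x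

lemma orient_cos_sin_pos {α β γ : ℝ} (hαβ : α < β) (hβγ : β < γ) (hγα : γ < α + 2 * π) :
    0 < orient (cos α, sin α) (cos β, sin β) (cos γ, sin γ) := by
  have h := sin_two_mul_add_sin_two_mul_sub_sin ((β - α) / 2) ((γ - β) / 2)
  rw [show 2 * ((β - α) / 2) = β - α by ring, show 2 * ((γ - β) / 2) = γ - β by ring,
    show β - α + (γ - β) = γ - α by ring,
    show (β - α) / 2 + (γ - β) / 2 = (γ - α) / 2 by ring] at h
  have sin_half_pos : ∀ t, 0 < t → t < 2 * π → 0 < sin (t / 2) := fun t h₀ h₁ ↦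
    sin_pos_of_pos_of_lt_pi (by linarith) (by linarith)
  rw [orient_cos_sin, h]
  have := sin_half_pos (β - α) (by linarith) (by linarith)
  have := sin_half_pos (γ - β) (by linarith) (by linarith)
  have := sin_half_pos (γ - α) (by linarith) (by linarith)
  positivity

end Circle

lemma circlePlacement_isConvexCCW (n : ℕ) : IsConvexCCW (circlePlacement n) := by
  intro i j k hij hjk
  have hn : (0 : ℝ) < n := Nat.cast_pos.2 k.pos
  have hij' : ((i : ℕ) : ℝ) < j := by exact_mod_cast hij
  have hjk' : ((j : ℕ) : ℝ) < k := by exact_mod_cast hjk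
  have hki : ((k : ℕ) : ℝ) < i + n := by
    have : ((k : ℕ) : ℝ) < n := by exact_mod_cast k.is_lt
    linarith [(Nat.cast_nonneg i : (0 : ℝ) ≤ i)]
  apply orient_cos_sin_pos
  · gcongr
  · gcongr
  · rw [div_add' _ _ _ hn.ne', div_lt_div_iff_of_pos_right hn]
    nlinarith [Real.pi_pos]

open scoped Classical in
theorem circleDrawing_completeGraph_crossings_general (n : ℕ) :
    ((((Finset.univ : Finset (Fin n)).powersetCard 2).powersetCard 2).filter
      (fun s => ∃ a c b d : Fin n,
        s = {({a, c} : Finset (Fin n)), {b, d}} ∧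
        (openSegment ℝ (circlePlacement n a) (circlePlacement n c) ∩
          openSegment ℝ (circlePlacement n b) (circlePlacement n d)).Nonempty)).card
      = n.choose 4 := by
  have h := (circlePlacement_isConvexCCW n).card_crossingPairs
  rw [Fintype.card_fin] at h
  unfold crossingPairs SegmentsCross at h
  -- `convert` reconciles `instDecidableEqFin` with the decidable equality of the order on `Fin n`
  convert h

open scoped Classical in
/-- The straight-line circle drawing of the complete graph `K_n` has exactly
`n.choose 4` crossings: the number of unordered pairs `{e, f}` of distinct
2-element subsets `e = {a, c}`, `f = {b, d}` of `Fin n` whose open segments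
`p a p c` and `p b p d` intersect is `n.choose 4`. -/
theorem circleDrawing_completeGraph_crossings (n : ℕ) (hn : 4 ≤ n) :
    ((((Finset.univ : Finset (Fin n)).powersetCard 2).powersetCard 2).filter
      (fun s => ∃ a c b d : Fin n,
        s = {({a, c} : Finset (Fin n)), {b, d}} ∧
        (openSegment ℝ (circlePlacement n a) (circlePlacement n c) ∩
          openSegment ℝ (circlePlacement n b) (circlePlacement n d)).Nonempty)).card
      = n.choose 4 :=
  circleDrawing_completeGraph_crossings_general n
end

section
/- Let n ≥ 4 and let p : Fin n → ℝ² be the circle placement p(i) = (cos(2πi/n), sin(2πi/n)). If a < b < c < d are four indices in Fin n, then the intersection of the open segment between p(a) and p(c) with the open segment between p(b) and p(d) consists of exactly one point. (In the proof of Lemma 1, each interleaved 4-set corresponds to exactly one crossing of the circle drawing.) -/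
open Real

private lemma sin_id (x y : ℝ) :
    sin x + sin y - sin (x + y) = 4 * sin (x/2) * sin (y/2) * sin ((x+y)/2) := by
  have hx : sin x = 2 * sin (x/2) * cos (x/2) := by rw [← sin_two_mul]; congr 1; ring
  have hy : sin y = 2 * sin (y/2) * cos (y/2) := by rw [← sin_two_mul]; congr 1; ring
  have hxy : sin (x+y) = 2 * sin (x/2 + y/2) * cos (x/2 + y/2) := by
    rw [← sin_two_mul]; congr 1; ring
  have e : (x+y)/2 = x/2 + y/2 := by ring
  rw [hx, hy, hxy, e, sin_add, cos_add]
  linear_combination (-(2*sin (y/2)*cos (y/2))) * (sin_sq_add_cos_sq (x/2)) +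
    (-(2*sin (x/2)*cos (x/2))) * (sin_sq_add_cos_sq (y/2))

private lemma det_pos {α β γ : ℝ} (h1 : α < β) (h2 : β < γ) (h3 : γ - α < 2*π) :
    0 < (cos β - cos α) * (sin γ - sin α) - (sin β - sin α) * (cos γ - cos α) := by
  have key : (cos β - cos α) * (sin γ - sin α) - (sin β - sin α) * (cos γ - cos α)
      = 4 * sin ((β-α)/2) * sin ((γ-β)/2) * sin ((γ-α)/2) := by
    have h := sin_id (β-α) (γ-β)
    have hxy : β - α + (γ - β) = γ - α := by ring
    rw [hxy] at h
    rw [← h]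
    simp [sin_sub]; ring
  rw [key]
  have s1 : 0 < sin ((β-α)/2) := sin_pos_of_pos_of_lt_pi (by linarith) (by nlinarith [pi_pos])
  have s2 : 0 < sin ((γ-β)/2) := sin_pos_of_pos_of_lt_pi (by linarith) (by nlinarith [pi_pos])
  have s3 : 0 < sin ((γ-α)/2) := sin_pos_of_pos_of_lt_pi (by linarith) (by nlinarith [pi_pos])
  positivity

/-- For `a < b < c < d` in `Fin n`, the intersection of the open segments
`p a p c` and `p b p d` of the circle drawing consists of exactly one point. -/
theorem interleaved_chords_cross_unique (n : ℕ) (hn : 4 ≤ n)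
    (a b c d : Fin n) (hab : a < b) (hbc : b < c) (hcd : c < d) :
    ∃ q : ℝ × ℝ,
      openSegment ℝ (circlePlacement n a) (circlePlacement n c) ∩
        openSegment ℝ (circlePlacement n b) (circlePlacement n d) = {q} := by
  have hn0 : (0:ℝ) < n := by
    have : 0 < n := by omega
    exact_mod_cast this
  set A : ℝ := 2 * π * (a : ℕ) / n with hA
  set B : ℝ := 2 * π * (b : ℕ) / n with hB
  set C : ℝ := 2 * π * (c : ℕ) / n with hC
  set D : ℝ := 2 * π * (d : ℕ) / n with hD
  have hpa : circlePlacement n a = (cos A, sin A) := rfl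
  have hpb : circlePlacement n b = (cos B, sin B) := rfl
  have hpc : circlePlacement n c = (cos C, sin C) := rfl
  have hpd : circlePlacement n d = (cos D, sin D) := rfl
  have mono : ∀ i j : Fin n, i < j → 2 * π * (i:ℕ) / n < 2 * π * (j:ℕ) / n := by
    intro i j hij
    have hij' : ((i:ℕ):ℝ) < ((j:ℕ):ℝ) := by exact_mod_cast hij
    rw [div_lt_div_iff₀ hn0 hn0]
    nlinarith [mul_lt_mul_of_pos_left hij' (show (0:ℝ) < 2*π*(n:ℝ) by positivity)]
  have hAB : A < B := mono a b hab
  have hBC : B < C := mono b c hbc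
  have hCD : C < D := mono c d hcd
  have hDA : D - A < 2 * π := by
    have hd : ((d:ℕ):ℝ) < n := by exact_mod_cast d.2
    have ha0 : (0:ℝ) ≤ ((a:ℕ):ℝ) := Nat.cast_nonneg _
    rw [hD, hA, div_sub_div_same, div_lt_iff₀ hn0]
    nlinarith [pi_pos]
  -- the four triple determinants
  have hP : 0 < (cos B - cos A) * (sin C - sin A) - (sin B - sin A) * (cos C - cos A) :=
    det_pos hAB hBC (by linarith)
  have hQ : 0 < (cos C - cos A) * (sin D - sin A) - (sin C - sin A) * (cos D - cos A) :=
    det_pos (lt_trans hAB hBC) hCD hDA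
  have hS : 0 < (cos C - cos B) * (sin D - sin B) - (sin C - sin B) * (cos D - cos B) :=
    det_pos hBC hCD (by linarith)
  have hR : 0 < (cos D - cos B) * (sin A - sin B) - (sin D - sin B) * (cos A - cos B) := by
    have h := det_pos (lt_trans hBC hCD) (show D < A + 2*π by linarith)
      (show A + 2*π - B < 2*π by linarith)
    rwa [cos_add_two_pi, sin_add_two_pi] at h
  set P : ℝ := (cos B - cos A) * (sin C - sin A) - (sin B - sin A) * (cos C - cos A) with hPd
  set Q : ℝ := (cos C - cos A) * (sin D - sin A) - (sin C - sin A) * (cos D - cos A) with hQd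
  set S : ℝ := (cos C - cos B) * (sin D - sin B) - (sin C - sin B) * (cos D - cos B) with hSd
  set R : ℝ := (cos D - cos B) * (sin A - sin B) - (sin D - sin B) * (cos A - cos B) with hRd
  have hRS : R + S = P + Q := by rw [hPd, hQd, hSd, hRd]; ring
  have hX : 0 < P + Q := by linarith
  set t : ℝ := P / (P + Q) with htd
  set s : ℝ := R / (P + Q) with hsd
  have ht0 : 0 < t := div_pos hP hX
  have ht1 : t < 1 := (div_lt_one hX).2 (by linarith)
  have hs0 : 0 < s := div_pos hR hX
  have hs1 : s < 1 := (div_lt_one hX).2 (by linarith)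
  refine ⟨((1-t) * cos B + t * cos D, (1-t) * sin B + t * sin D), ?_⟩
  have key1 : (1-t) * cos B + t * cos D = (1-s) * cos A + s * cos C := by
    rw [htd, hsd]
    field_simp
    rw [hPd, hQd, hRd]
    ring
  have key2 : (1-t) * sin B + t * sin D = (1-s) * sin A + s * sin C := by
    rw [htd, hsd]
    field_simp
    rw [hPd, hQd, hRd]
    ring
  rw [Set.eq_singleton_iff_unique_mem]
  constructor
  · constructor
    · rw [hpa, hpc, openSegment_eq_image]
      exact ⟨s, ⟨hs0, hs1⟩, by
        simp only [Prod.smul_mk, Prod.mk_add_mk, smul_eq_mul, key1, key2]⟩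
    · rw [hpb, hpd, openSegment_eq_image]
      exact ⟨t, ⟨ht0, ht1⟩, by
        simp only [Prod.smul_mk, Prod.mk_add_mk, smul_eq_mul]⟩
  · rintro r ⟨hr1, hr2⟩
    rw [hpa, hpc, openSegment_eq_image] at hr1
    rw [hpb, hpd, openSegment_eq_image] at hr2
    obtain ⟨σ, hσ, hrσ⟩ := hr1
    obtain ⟨τ, hτ, hrτ⟩ := hr2
    simp only [Prod.smul_mk, Prod.mk_add_mk, smul_eq_mul] at hrσ hrτ
    have rσ1 : r.1 = (1-σ) * cos A + σ * cos C := by rw [← hrσ]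
    have rσ2 : r.2 = (1-σ) * sin A + σ * sin C := by rw [← hrσ]
    have rτ1 : r.1 = (1-τ) * cos B + τ * cos D := by rw [← hrτ]
    have rτ2 : r.2 = (1-τ) * sin B + τ * sin D := by rw [← hrτ]
    have hzero : (τ - t) * (P + Q) = 0 := by
      have w1 : (cos C - cos A) * (r.2 - ((1-t) * sin B + t * sin D))
          - (sin C - sin A) * (r.1 - ((1-t) * cos B + t * cos D)) = (τ - t) * (P + Q) := by
        rw [rτ1, rτ2, hPd, hQd]; ring
      have w2 : (cos C - cos A) * (r.2 - ((1-t) * sin B + t * sin D))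
          - (sin C - sin A) * (r.1 - ((1-t) * cos B + t * cos D)) = 0 := by
        rw [rσ1, rσ2, key1, key2]; ring
      linarith [w1, w2]
    have hτt : τ = t := by
      rcases mul_eq_zero.1 hzero with h | h
      · linarith
      · linarith
    have : r = ((1-τ) * cos B + τ * cos D, (1-τ) * sin B + τ * sin D) := by
      exact Prod.ext rτ1 rτ2
    rw [this, hτt]
end

section
/- Let n ≥ 4 and let p : Fin n → ℝ² be the circle placement p(i) = (cos(2πi/n), sin(2πi/n)). If a < b < c < d are four indices in Fin n, then the closed segment between p(a) and p(b) is disjoint from the closed segment between p(c) and p(d), and the closed segment between p(b) and p(c) is disjoint from the closed segment between p(a) and p(d). (Non-interleaved chords of the circle drawing do not cross: in the proof of Lemma 1, each 4-set of vertices contributes only the one crossing between the interleaved pair of edges.) -/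
/-!
Write `orientDet p q r` for the orientation determinant of three points of the plane. Three
points of the unit circle at angles `α < β < γ < α + 2π` are positively oriented, because the
determinant factors as `4 sin ((β - α)/2) sin ((γ - α)/2) sin ((γ - β)/2)`. For `a < b < c < d`
this puts `p c` and `p d` strictly on the same side of the line `p a p b`, and `p a` and `p d`
strictly on the same side of the line `p b p c`; a line with both ends of one segment on it and
both ends of the other strictly on one side separates the two segments.
-/

open Real

theorem disjoint_segment_of_separated {E : Type*} [AddCommGroup E] [Module ℝ E]
    (f : E →ₗ[ℝ] ℝ) {c : ℝ} {p q u v : E} (hp : f p ≤ c) (hq : f q ≤ c)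
    (hu : c < f u) (hv : c < f v) :
    Disjoint (segment ℝ p q) (segment ℝ u v) := by
  have hle : segment ℝ p q ⊆ {x | f x ≤ c} :=
    (convex_halfSpace_le f.isLinear c).segment_subset hp hq
  have hgt : segment ℝ u v ⊆ {x | c < f x} :=
    (convex_halfSpace_gt f.isLinear c).segment_subset hu hv
  exact Set.disjoint_left.mpr fun x hpq huv =>
    (show f x ≤ c from hle hpq).not_gt (show c < f x from hgt huv)

def orientDet (p q r : ℝ × ℝ) : ℝ :=
  (q.1 - p.1) * (r.2 - p.2) - (q.2 - p.2) * (r.1 - p.1)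

theorem orientDet_rotate (p q r : ℝ × ℝ) : orientDet q r p = orientDet p q r := by
  unfold orientDet
  ring

theorem disjoint_segment_of_orientDet_pos {p q u v : ℝ × ℝ}
    (hu : 0 < orientDet p q u) (hv : 0 < orientDet p q v) :
    Disjoint (segment ℝ p q) (segment ℝ u v) := by
  let f : ℝ × ℝ →ₗ[ℝ] ℝ :=
    (q.1 - p.1) • LinearMap.snd ℝ ℝ ℝ - (q.2 - p.2) • LinearMap.fst ℝ ℝ ℝ
  have hf : ∀ x, f x - f p = orientDet p q x := fun x => by
    simp only [f, orientDet, LinearMap.sub_apply, LinearMap.smul_apply, LinearMap.fst_apply,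
      LinearMap.snd_apply, smul_eq_mul]
    ring
  have hq : f q = f p := by
    have := hf q
    simp only [orientDet] at this
    linarith
  refine disjoint_segment_of_separated f le_rfl hq.le ?_ ?_
  · linarith [hf u]
  · linarith [hf v]

theorem orientDet_cos_sin (α β γ : ℝ) :
    orientDet (cos α, sin α) (cos β, sin β) (cos γ, sin γ)
      = 4 * sin ((β - α) / 2) * sin ((γ - α) / 2) * sin ((γ - β) / 2) := by
  simp only [orientDet]
  rw [cos_sub_cos, sin_sub_sin, sin_sub_sin, cos_sub_cos,
    show (γ - β) / 2 = (γ + α) / 2 - (β + α) / 2 by ring, sin_sub]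
  ring

theorem orientDet_cos_sin_pos {α β γ : ℝ} (hαβ : α < β) (hβγ : β < γ) (hγα : γ < α + 2 * π) :
    0 < orientDet (cos α, sin α) (cos β, sin β) (cos γ, sin γ) := by
  have sin_half_pos : ∀ {x y : ℝ}, x < y → y < x + 2 * π → 0 < sin ((y - x) / 2) :=
    fun hxy hyx => sin_pos_of_pos_of_lt_pi (by linarith) (by linarith)
  rw [orientDet_cos_sin]
  have := sin_half_pos hαβ (by linarith)
  have := sin_half_pos (hαβ.trans hβγ) hγα
  have := sin_half_pos hβγ (by linarith)
  positivity

theorem orientDet_circlePlacement_pos {n : ℕ} {i j k : Fin n} (hij : i < j) (hjk : j < k) :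
    0 < orientDet (circlePlacement n i) (circlePlacement n j) (circlePlacement n k) := by
  have hn : (0 : ℝ) < n := by exact_mod_cast i.pos
  have hk : ((k : ℕ) : ℝ) < n + (i : ℕ) := by
    have : (k : ℕ) < n + (i : ℕ) := by omega
    exact_mod_cast this
  have hij' : ((i : ℕ) : ℝ) < (j : ℕ) := by exact_mod_cast hij
  have hjk' : ((j : ℕ) : ℝ) < (k : ℕ) := by exact_mod_cast hjk
  apply orientDet_cos_sin_pos
  · gcongr
  · gcongr
  · calc 2 * π * (k : ℕ) / n < 2 * π * (n + (i : ℕ)) / n := by gcongr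
      _ = 2 * π * (i : ℕ) / n + 2 * π := by field_simp; ring

theorem non_interleaved_chords_disjoint_general (n : ℕ)
    (a b c d : Fin n) (hab : a < b) (hbc : b < c) (hcd : c < d) :
    Disjoint (segment ℝ (circlePlacement n a) (circlePlacement n b))
        (segment ℝ (circlePlacement n c) (circlePlacement n d)) ∧
      Disjoint (segment ℝ (circlePlacement n b) (circlePlacement n c))
        (segment ℝ (circlePlacement n a) (circlePlacement n d)) := by
  have habc := orientDet_circlePlacement_pos hab hbc
  refine ⟨disjoint_segment_of_orientDet_pos habc
      (orientDet_circlePlacement_pos hab (hbc.trans hcd)), ?_⟩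
  refine disjoint_segment_of_orientDet_pos ?_ (orientDet_circlePlacement_pos hbc hcd)
  rwa [orientDet_rotate]

/-- Non-interleaved chords of the circle drawing do not cross: for `a < b < c < d`
in `Fin n`, the closed segment `p a p b` is disjoint from the closed segment `p c p d`,
and the closed segment `p b p c` is disjoint from the closed segment `p a p d`. -/
theorem non_interleaved_chords_disjoint (n : ℕ) (hn : 4 ≤ n)
    (a b c d : Fin n) (hab : a < b) (hbc : b < c) (hcd : c < d) :
    Disjoint (segment ℝ (circlePlacement n a) (circlePlacement n b))
        (segment ℝ (circlePlacement n c) (circlePlacement n d)) ∧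
      Disjoint (segment ℝ (circlePlacement n b) (circlePlacement n c))
        (segment ℝ (circlePlacement n a) (circlePlacement n d)) :=
  non_interleaved_chords_disjoint_general n a b c d hab hbc hcd
end
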